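/- The 7-dimensional algebra L(0,0,0,0,0) with only nonzero products [e₀,e₀]=e₂ and [eᵢ,e₀]=e_{i+1} for 2≤i≤5 is a filiform Leibniz algebra that is not a Lie algebra, and every other algebra in the classification list of SLeib₇ with some nonzero parameter is not isomorphic to it. -/

import Mathlib

/-- The bracket of the algebra `L(β₃,β₄,β₅,β₆,γ)` in `SLeib₇`. -/
def brS7 (b3 b4 b5 b6 g : ℂ) (x y : Fin 7 → ℂ) : Fin 7 → ℂ :=
  ![0, 0,
    x 0 * y 0,
    x 2 * y 0 + b3 * (x 0 * y 1),
    x 3 * y 0 + b4 * (x 0 * y 1) + b3 * (x 2 * y 1),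
    x 4 * y 0 + b5 * (x 0 * y 1) + b4 * (x 2 * y 1) + b3 * (x 3 * y 1),
    x 5 * y 0 + b6 * (x 0 * y 1) + g * (x 1 * y 1) + b5 * (x 2 * y 1) +
      b4 * (x 3 * y 1) + b3 * (x 4 * y 1)]

/-- The bracket of `L(0,0,0,0,0)`. -/
def brS7zero : (Fin 7 → ℂ) → (Fin 7 → ℂ) → (Fin 7 → ℂ) := brS7 0 0 0 0 0

/-- Lower central series of `L(0,0,0,0,0)`: `lcsS7zero k = L^{k+1}`. -/
noncomputable def lcsS7zero : ℕ → Submodule ℂ (Fin 7 → ℂ)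
  | 0 => ⊤
  | n + 1 => Submodule.span ℂ {z | ∃ x ∈ lcsS7zero n, ∃ y : Fin 7 → ℂ, z = brS7zero x y}

/-! The bracket of `L(0,0,0,0,0)` is `[x, y] = y₀ • S x` for the shift `S : e₀ ↦ e₂, eᵢ ↦ eᵢ₊₁`
(`2 ≤ i ≤ 5`), so `L^{k+1} = S(L^k)` consists of the vectors whose first `k + 1` coordinates
vanish. If `f : L(β₃,β₄,β₅,β₆,γ) → L(0,0,0,0,0)` is an isomorphism, every `y` with `(f y)₀ = 0` is
a right annihilator of `L(β₃,β₄,β₅,β₆,γ)`. That hyperplane meets `span(e₀, e₁)` nontrivially, and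
a right annihilator with `y₀ ≠ 0` or `y₁ ≠ 0` forces every parameter to vanish. -/

open Module LinearMap

section CoordsVanishBelow

variable (K : Type*) [Field K] (n m : ℕ)

def coordsVanishBelow : Submodule K (Fin n → K) :=
  ⨅ i ∈ {i : Fin n | (i : ℕ) < m}, ker (proj i)

variable {K n m}

theorem mem_coordsVanishBelow {x : Fin n → K} :
    x ∈ coordsVanishBelow K n m ↔ ∀ i : Fin n, (i : ℕ) < m → x i = 0 := by
  simp [coordsVanishBelow]

theorem finrank_coordsVanishBelow : finrank K (coordsVanishBelow K n m) = n - m := by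
  classical
  have hd : Disjoint {i : Fin n | m ≤ (i : ℕ)} {i | (i : ℕ) < m} :=
    Set.disjoint_left.2 fun _ hi hi' => (Nat.not_lt.2 hi) hi'
  rw [coordsVanishBelow, (iInfKerProjEquiv K (fun _ => K) hd fun i _ => le_or_gt m i).finrank_eq,
    finrank_fintype_fun_eq_card, Fintype.card_ofFinset]
  have hsplit := Finset.card_filter_add_card_filter_not (s := Finset.univ)
    fun i : Fin n => (i : ℕ) < m
  simp only [Fin.card_filter_val_lt, Finset.card_univ, Fintype.card_fin, not_lt] at hsplit
  change (Finset.univ.filter fun i : Fin n => m ≤ (i : ℕ)).card = n - m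
  omega

end CoordsVanishBelow

def shiftS7 : (Fin 7 → ℂ) →ₗ[ℂ] (Fin 7 → ℂ) :=
  pi ![0, 0, proj 0, proj 2, proj 3, proj 4, proj 5]

theorem shiftS7_apply (x : Fin 7 → ℂ) : shiftS7 x = ![0, 0, x 0, x 2, x 3, x 4, x 5] := by
  ext i; fin_cases i <;> rfl

theorem brS7zero_eq_smul_shiftS7 (x y : Fin 7 → ℂ) : brS7zero x y = y 0 • shiftS7 x := by
  ext i; fin_cases i <;> simp [brS7zero, brS7, shiftS7_apply, mul_comm]

theorem lcsS7zero_succ (k : ℕ) : lcsS7zero (k + 1) = (lcsS7zero k).map shiftS7 := by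
  rw [lcsS7zero]
  apply le_antisymm
  · rw [Submodule.span_le]
    rintro _ ⟨x, hx, y, rfl⟩
    rw [brS7zero_eq_smul_shiftS7, ← map_smul]
    exact Submodule.mem_map_of_mem (Submodule.smul_mem _ _ hx)
  · rintro _ ⟨x, hx, rfl⟩
    exact Submodule.subset_span ⟨x, hx, Pi.single 0 1, by simp [brS7zero_eq_smul_shiftS7]⟩

theorem range_shiftS7 : range shiftS7 = coordsVanishBelow ℂ 7 2 := by
  apply le_antisymm
  · rintro _ ⟨x, rfl⟩
    rw [mem_coordsVanishBelow]
    intro i hi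
    fin_cases i <;> simp_all [shiftS7_apply]
  · intro z hz
    rw [mem_coordsVanishBelow] at hz
    refine ⟨![z 2, 0, z 3, z 4, z 5, z 6, 0], ?_⟩
    ext i; fin_cases i <;> simp [shiftS7_apply, hz]

theorem map_shiftS7_coordsVanishBelow {m : ℕ} (hm : 2 ≤ m) :
    (coordsVanishBelow ℂ 7 m).map shiftS7 = coordsVanishBelow ℂ 7 (m + 1) := by
  apply le_antisymm
  · rintro _ ⟨x, hx, rfl⟩
    rw [SetLike.mem_coe, mem_coordsVanishBelow] at hx
    rw [mem_coordsVanishBelow]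
    intro i hi
    fin_cases i <;> first | rfl | exact hx _ (by simp at hi ⊢; omega)
  · intro z hz
    rw [mem_coordsVanishBelow] at hz
    refine ⟨![z 2, 0, z 3, z 4, z 5, z 6, 0], ?_, ?_⟩
    · rw [SetLike.mem_coe, mem_coordsVanishBelow]
      intro i hi
      fin_cases i <;> first | rfl | exact hz _ (by simp at hi ⊢; omega)
    · ext i; fin_cases i <;> simp [shiftS7_apply, hz 0 (by omega), hz 1 (by omega)]

theorem lcsS7zero_eq {k : ℕ} (hk : 1 ≤ k) : lcsS7zero k = coordsVanishBelow ℂ 7 (k + 1) := by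
  induction k, hk using Nat.le_induction with
  | base => rw [lcsS7zero_succ, lcsS7zero, Submodule.map_top, range_shiftS7]
  | succ k hk ih => rw [lcsS7zero_succ, ih, map_shiftS7_coordsVanishBelow (by omega)]

theorem brS7zero_not_antisymm : ¬ ∀ x y : Fin 7 → ℂ, brS7zero x y = - brS7zero y x := by
  intro h
  have h2 : (1 : ℂ) = -1 := by
    simpa [brS7zero, brS7] using congrFun (h (Pi.single 0 1) (Pi.single 0 1)) 2
  norm_num at h2

theorem exists_mem_ker_apply_ne_zero_or_apply_ne_zero {R ι : Type*} [CommRing R] [Nontrivial R]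
    [DecidableEq ι] (φ : (ι → R) →ₗ[R] R) {i j : ι} (hij : i ≠ j) :
    ∃ y ∈ ker φ, y i ≠ 0 ∨ y j ≠ 0 := by
  by_cases hi : φ (Pi.single i 1) = 0
  · exact ⟨Pi.single i 1, hi, Or.inl (by simp)⟩
  · refine ⟨φ (Pi.single j 1) • Pi.single i 1 - φ (Pi.single i 1) • Pi.single j 1, ?_, Or.inr ?_⟩
    · simp [mul_comm]
    · simpa [hij.symm] using hi

theorem brS7_eq_zero_of_apply_zero_eq_zero {b3 b4 b5 b6 g : ℂ}
    {f : (Fin 7 → ℂ) →ₗ[ℂ] (Fin 7 → ℂ)} (hf_inj : Function.Injective f)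
    (hf : ∀ x y : Fin 7 → ℂ, f (brS7 b3 b4 b5 b6 g x y) = brS7zero (f x) (f y))
    {y : Fin 7 → ℂ} (hy : f y 0 = 0) (x : Fin 7 → ℂ) : brS7 b3 b4 b5 b6 g x y = 0 :=
  hf_inj (by rw [hf, brS7zero_eq_smul_shiftS7, hy, zero_smul, map_zero])

theorem params_eq_zero_of_forall_brS7_eq_zero {b3 b4 b5 b6 g : ℂ} {y : Fin 7 → ℂ}
    (hy : ∀ x, brS7 b3 b4 b5 b6 g x y = 0) (hy01 : y 0 ≠ 0 ∨ y 1 ≠ 0) :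
    b3 = 0 ∧ b4 = 0 ∧ b5 = 0 ∧ b6 = 0 ∧ g = 0 := by
  have h0 := congrFun (hy (Pi.single 0 1))
  have h1 := congrFun (hy (Pi.single 1 1))
  have hy0 : y 0 = 0 := by simpa [brS7] using h0 2
  have cancel : ∀ c : ℂ, c * y 1 = 0 → c = 0 :=
    fun c hc => (mul_eq_zero.1 hc).resolve_right (hy01.resolve_left (not_not.2 hy0))
  exact ⟨cancel _ (by simpa [brS7, hy0] using h0 3), cancel _ (by simpa [brS7, hy0] using h0 4),
    cancel _ (by simpa [brS7, hy0] using h0 5), cancel _ (by simpa [brS7, hy0] using h0 6),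
    cancel _ (by simpa [brS7] using h1 6)⟩

/-- `L(0,0,0,0,0)` is filiform, not a Lie algebra, and no algebra
`L(β₃,β₄,β₅,β₆,γ)` of `SLeib₇` with a nonzero parameter is isomorphic to it. -/
theorem L00000_filiform_nonLie_isolated :
    (∀ i : ℕ, 2 ≤ i → i ≤ 7 → Module.finrank ℂ (lcsS7zero (i - 1)) = 7 - i) ∧
    (¬ ∀ x y : Fin 7 → ℂ, brS7zero x y = - brS7zero y x) ∧
    (∀ b3 b4 b5 b6 g : ℂ,
      (∃ f : (Fin 7 → ℂ) ≃ₗ[ℂ] (Fin 7 → ℂ),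
        ∀ x y : Fin 7 → ℂ, f (brS7 b3 b4 b5 b6 g x y) = brS7zero (f x) (f y)) →
      b3 = 0 ∧ b4 = 0 ∧ b5 = 0 ∧ b6 = 0 ∧ g = 0) := by
  refine ⟨fun i hi2 hi7 => ?_, brS7zero_not_antisymm, ?_⟩
  · rw [lcsS7zero_eq (by omega), finrank_coordsVanishBelow]
    omega
  · rintro b3 b4 b5 b6 g ⟨f, hf⟩
    obtain ⟨y, hy, hy01⟩ := exists_mem_ker_apply_ne_zero_or_apply_ne_zero
      ((proj 0).comp f.toLinearMap) (show (0 : Fin 7) ≠ 1 by decide)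
    exact params_eq_zero_of_forall_brS7_eq_zero
      (brS7_eq_zero_of_apply_zero_eq_zero f.injective hf hy) hy01
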